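/- Let d ≥ 1, let ρ > 0, L_g > 0, and γ > 0 satisfy γρ < 1 and γL_g ≤ 1/2. Let g : ℝ^d → ℝ be ρ-weakly convex and twice continuously differentiable, and suppose that the Hessian of g satisfies ‖∇²g(z)‖ ≤ L_g (in operator norm) for every z in the image Prox_{γg}(ℝ^d). Then the Moreau envelope g^γ is 2L_g-smooth on ℝ^d: its Hessian satisfies −2L_g‖v‖² ≤ ⟨∇²g^γ(x) v, v⟩ ≤ L_g‖v‖² for all x, v ∈ ℝ^d, and in particular ∇g^γ is Lipschitz continuous with constant 2L_g. -/

import Mathlib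

open scoped RealInnerProductSpace

open Asymptotics Set

/-! With `p = Prox_{γg}(x)`, the first-order condition reads `x = p + γ ∇g(p)`, and weak convexity
with `γρ < 1` makes `ψ : y ↦ y + γ ∇g(y)` injective, so `Prox_{γg}` is the inverse of `ψ`. As
`A = ∇²g(p)` has `‖γA‖ ≤ 1/2`, the inverse function theorem differentiates `Prox_{γg}` at `x` with
derivative `B = (1 + γA)⁻¹`, `‖B‖ ≤ 2`, so `G x = γ⁻¹ (x - Prox_{γg}(x))` has derivative
`γ⁻¹ (1 - B) = A B`. Substituting `v = w + γ A w` turns the quadratic form into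
`⟪A w, w + γ A w⟫`, which is compared with `‖w + γ A w‖²` using only `‖A‖ ≤ L_g` and
Cauchy–Schwarz. The mean value inequality makes `G` `2 L_g`-Lipschitz, and then the envelope,
squeezed between the quadratic models at `Prox_{γg}(z)` and `Prox_{γg}(w)`, has gradient `G`. -/

/-- For `v = w + γ • A w`, the two sides below are `⟪A w, v⟫` and `‖v‖²` written through
`s = ⟪A w, w⟫`, `t = ‖A w‖` and `W = ‖w‖`. -/
lemma resolvent_quadratic_bounds {γ L s t W : ℝ} (hγ : 0 ≤ γ) (hL : 0 ≤ L)
    (hγL : γ * L ≤ 1 / 2) (ht : 0 ≤ t) (hW : 0 ≤ W) (hs : |s| ≤ t * W) (htW : t ≤ L * W) :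
    -(2 * L) * (W ^ 2 + 2 * γ * s + γ ^ 2 * t ^ 2) ≤ s + γ * t ^ 2 ∧
      s + γ * t ^ 2 ≤ L * (W ^ 2 + 2 * γ * s + γ ^ 2 * t ^ 2) := by
  obtain ⟨hsl, hsu⟩ := abs_le.1 hs
  have ha : 0 ≤ γ * L := mul_nonneg hγ hL
  have hu : 0 ≤ L * W - t := sub_nonneg.2 htW
  constructor
  · nlinarith [mul_nonneg (by linarith : 0 ≤ 1 + 4 * (γ * L)) (by linarith : 0 ≤ s + t * W),
      mul_nonneg (mul_nonneg hu hW) (by nlinarith : 0 ≤ 1 + 2 * (γ * L) - 4 * (γ * L) ^ 2),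
      mul_nonneg (mul_nonneg hγ (by linarith : 0 ≤ 1 + 2 * (γ * L))) (mul_self_nonneg (L * W - t)),
      mul_nonneg (mul_nonneg hL (sq_nonneg W))
        (mul_nonneg (by linarith : 0 ≤ 1 - γ * L) (by linarith : 0 ≤ 1 - 2 * (γ * L)))]
  · nlinarith [mul_nonneg (by linarith : 0 ≤ 1 - 2 * (γ * L)) (by linarith : 0 ≤ t * W - s),
      mul_nonneg (mul_nonneg (by linarith : 0 ≤ 1 - γ * L) (mul_nonneg hγ ht)) hu,
      mul_nonneg (mul_nonneg hW hu) (by nlinarith : 0 ≤ 1 - γ * L - (γ * L) ^ 2),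
      mul_nonneg (by positivity : 0 ≤ γ * L + (γ * L) ^ 2) (mul_nonneg hL (sq_nonneg W))]

variable {E : Type*} [NormedAddCommGroup E]

def IsProxMap (γ : ℝ) (g : E → ℝ) (prox : E → E) : Prop :=
  ∀ x y, 1 / (2 * γ) * ‖x - prox x‖ ^ 2 + g (prox x) ≤ 1 / (2 * γ) * ‖x - y‖ ^ 2 + g y

noncomputable def moreauEnvelope (γ : ℝ) (g : E → ℝ) (x : E) : ℝ :=
  ⨅ y, 1 / (2 * γ) * ‖x - y‖ ^ 2 + g y

namespace IsProxMap

variable {γ : ℝ} {g : E → ℝ} {prox : E → E}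

lemma moreauEnvelope_le (hprox : IsProxMap γ g prox) (x y : E) :
    moreauEnvelope γ g x ≤ 1 / (2 * γ) * ‖x - y‖ ^ 2 + g y :=
  ciInf_le ⟨_, forall_mem_range.2 (hprox x)⟩ y

lemma moreauEnvelope_eq (hprox : IsProxMap γ g prox) (x : E) :
    moreauEnvelope γ g x = 1 / (2 * γ) * ‖x - prox x‖ ^ 2 + g (prox x) :=
  le_antisymm (hprox.moreauEnvelope_le x (prox x)) (le_ciInf (hprox x))

end IsProxMap

variable [InnerProductSpace ℝ E]

namespace ContinuousLinearMap

variable {A : E →L[ℝ] E} {γ L : ℝ}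

lemma inner_apply_add_smul_bounds (hγ : 0 ≤ γ) (hA : ‖A‖ ≤ L) (hγL : γ * L ≤ 1 / 2) (w : E) :
    -(2 * L) * ‖w + γ • A w‖ ^ 2 ≤ ⟪A w, w + γ • A w⟫ ∧
      ⟪A w, w + γ • A w⟫ ≤ L * ‖w + γ • A w‖ ^ 2 := by
  have hnorm : ‖w + γ • A w‖ ^ 2 = ‖w‖ ^ 2 + 2 * γ * ⟪A w, w⟫ + γ ^ 2 * ‖A w‖ ^ 2 := by
    rw [norm_add_sq_real, real_inner_smul_right, norm_smul, Real.norm_of_nonneg hγ,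
      real_inner_comm]
    ring
  have hinner : ⟪A w, w + γ • A w⟫ = ⟪A w, w⟫ + γ * ‖A w‖ ^ 2 := by
    rw [inner_add_right, real_inner_smul_right, real_inner_self_eq_norm_sq]
  rw [hnorm, hinner]
  exact resolvent_quadratic_bounds hγ ((norm_nonneg A).trans hA) hγL (norm_nonneg _)
    (norm_nonneg w) (abs_real_inner_le_norm _ _)
    ((A.le_opNorm w).trans (mul_le_mul_of_nonneg_right hA (norm_nonneg w)))

lemma norm_le_two_mul_of_add_smul_apply_eq (hγ : 0 ≤ γ) (hA : ‖A‖ ≤ L)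
    (hγL : γ * L ≤ 1 / 2) {w v : E} (h : w + γ • A w = v) : ‖w‖ ≤ 2 * ‖v‖ := by
  have hAw : ‖γ • A w‖ ≤ 1 / 2 * ‖w‖ :=
    calc ‖γ • A w‖ = γ * ‖A w‖ := by rw [norm_smul, Real.norm_of_nonneg hγ]
      _ ≤ γ * (L * ‖w‖) :=
        mul_le_mul_of_nonneg_left ((A.le_opNorm w).trans
          (mul_le_mul_of_nonneg_right hA (norm_nonneg w))) hγ
      _ ≤ 1 / 2 * ‖w‖ := by rw [← mul_assoc]; exact mul_le_mul_of_nonneg_right hγL (norm_nonneg w)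
  have : ‖w‖ ≤ ‖v‖ + ‖γ • A w‖ := by
    rw [← h]; simpa using norm_sub_le (w + γ • A w) (γ • A w)
  linarith

lemma exists_continuousLinearEquiv_one_add [CompleteSpace E] {T : E →L[ℝ] E} (hT : ‖T‖ < 1) :
    ∃ e : E ≃L[ℝ] E, (e : E →L[ℝ] E) = 1 + T :=
  ⟨ContinuousLinearEquiv.unitsEquiv ℝ E (Units.oneSub (-T) (by rwa [norm_neg])), by
    ext v; simp [Units.val_oneSub]⟩

end ContinuousLinearMap

lemma half_inv_mul_norm_sub_sq_eq {γ : ℝ} (hγ : γ ≠ 0) (w z p : E) :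
    1 / (2 * γ) * ‖w - p‖ ^ 2
      = 1 / (2 * γ) * ‖z - p‖ ^ 2 + ⟪γ⁻¹ • (z - p), w - z⟫ + 1 / (2 * γ) * ‖w - z‖ ^ 2 := by
  rw [show w - p = (z - p) + (w - z) by abel, norm_add_sq_real, real_inner_smul_left]
  field_simp

variable [CompleteSpace E]

lemma ConvexOn.inner_gradient_sub_nonneg {f : E → ℝ} {f' : E → E} (hf : ConvexOn ℝ univ f)
    (hf' : ∀ x, HasGradientAt f (f' x) x) (u v : E) : 0 ≤ ⟪f' u - f' v, u - v⟫ := by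
  have hφ : ConvexOn ℝ univ (f ∘ AffineMap.lineMap (k := ℝ) v u) := by
    simpa using hf.comp_affineMap (AffineMap.lineMap (k := ℝ) v u)
  have hφ' : ∀ t : ℝ, HasDerivAt (f ∘ AffineMap.lineMap (k := ℝ) v u)
      ⟪f' (AffineMap.lineMap v u t), u - v⟫ t := fun t => by
    simpa using (hf' _).hasFDerivAt.comp_hasDerivAt t AffineMap.hasDerivAt_lineMap
  have hmono := hφ.monotoneOn_deriv (fun t _ => (hφ' t).differentiableAt)
    (mem_univ 0) (mem_univ 1) zero_le_one
  rw [(hφ' 0).deriv, (hφ' 1).deriv] at hmono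
  simpa [inner_sub_left] using hmono

lemma inner_gradient_sub_ge_of_convexOn_add_sq {ρ : ℝ} {g : E → ℝ} {g' : E → E}
    (hweak : ConvexOn ℝ univ fun x => g x + ρ / 2 * ‖x‖ ^ 2)
    (hg' : ∀ x, HasGradientAt g (g' x) x) (u v : E) :
    -(ρ * ‖u - v‖ ^ 2) ≤ ⟪g' u - g' v, u - v⟫ := by
  have hgrad : ∀ x, HasGradientAt (fun x => g x + ρ / 2 * ‖x‖ ^ 2) (g' x + ρ • x) x := by
    intro x
    rw [hasGradientAt_iff_hasFDerivAt]
    refine ((hg' x).hasFDerivAt.add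
      ((hasStrictFDerivAt_norm_sq x).hasFDerivAt.const_mul (ρ / 2))).congr_fderiv ?_
    ext y
    simp
    ring
  have h := hweak.inner_gradient_sub_nonneg hgrad u v
  rw [show g' u + ρ • u - (g' v + ρ • v) = (g' u - g' v) + ρ • (u - v) by
    rw [smul_sub]; abel, inner_add_left, real_inner_smul_left, real_inner_self_eq_norm_sq] at h
  linarith

lemma add_smul_eq_of_isMinOn {γ : ℝ} (hγ : 0 < γ) {g : E → ℝ} {x p q : E}
    (hq : HasGradientAt g q p) (hp : IsMinOn (fun y => 1 / (2 * γ) * ‖x - y‖ ^ 2 + g y) univ p) :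
    p + γ • q = x := by
  have hd : HasGradientAt (fun y => 1 / (2 * γ) * ‖x - y‖ ^ 2 + g y) (γ⁻¹ • (p - x) + q) p := by
    rw [hasGradientAt_iff_hasFDerivAt] at hq ⊢
    refine ((((hasFDerivAt_id p).const_sub x).norm_sq.const_mul (1 / (2 * γ))).add
      hq).congr_fderiv ?_
    ext y
    simp
    field_simp
  have h0 : γ⁻¹ • (p - x) + q = 0 := (InnerProductSpace.toDual ℝ E).map_eq_zero_iff.1
    ((hp.isLocalMin Filter.univ_mem).hasFDerivAt_eq_zero (hasGradientAt_iff_hasFDerivAt.1 hd))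
  rw [eq_neg_of_add_eq_zero_right h0, smul_neg, smul_inv_smul₀ hγ.ne']
  abel

lemma injective_add_smul_gradient {γ ρ : ℝ} {g : E → ℝ} {g' : E → E} (hγ : 0 ≤ γ)
    (hγρ : γ * ρ < 1) (hweak : ConvexOn ℝ univ fun x => g x + ρ / 2 * ‖x‖ ^ 2)
    (hg' : ∀ x, HasGradientAt g (g' x) x) : Function.Injective fun y => y + γ • g' y := by
  intro a b hab
  have hab' : a - b = -(γ • (g' a - g' b)) := by
    rw [smul_sub]; linear_combination (norm := module) hab
  have hsq : ‖a - b‖ ^ 2 = -(γ * ⟪g' a - g' b, a - b⟫) := by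
    rw [← real_inner_self_eq_norm_sq]
    nth_rewrite 1 [hab']
    rw [inner_neg_left, real_inner_smul_left]
  have hmono := mul_le_mul_of_nonneg_left
    (inner_gradient_sub_ge_of_convexOn_add_sq hweak hg' a b) hγ
  have : ‖a - b‖ ^ 2 ≤ 0 := by nlinarith [sq_nonneg ‖a - b‖]
  exact sub_eq_zero.1 (norm_eq_zero.1 (pow_eq_zero_iff two_ne_zero |>.1
    (le_antisymm this (sq_nonneg _))))

namespace IsProxMap

variable {γ ρ L : ℝ} {g : E → ℝ} {g' : E → E} {g'' : E → E →L[ℝ] E} {prox : E → E}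

lemma add_smul_gradient_eq (hprox : IsProxMap γ g prox) (hγ : 0 < γ)
    (hg' : ∀ x, HasGradientAt g (g' x) x) (x : E) : prox x + γ • g' (prox x) = x :=
  add_smul_eq_of_isMinOn hγ (hg' _) fun y _ => hprox x y

lemma apply_add_smul_gradient (hprox : IsProxMap γ g prox) (hγ : 0 < γ) (hγρ : γ * ρ < 1)
    (hweak : ConvexOn ℝ univ fun x => g x + ρ / 2 * ‖x‖ ^ 2)
    (hg' : ∀ x, HasGradientAt g (g' x) x) (y : E) : prox (y + γ • g' y) = y :=
  injective_add_smul_gradient hγ.le hγρ hweak hg' (hprox.add_smul_gradient_eq hγ hg' _)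

lemma exists_hasFDerivAt (hprox : IsProxMap γ g prox) (hγ : 0 < γ) (hγρ : γ * ρ < 1)
    (hweak : ConvexOn ℝ univ fun x => g x + ρ / 2 * ‖x‖ ^ 2)
    (hg' : ∀ x, HasGradientAt g (g' x) x) (hg'' : ∀ x, HasFDerivAt g' (g'' x) x) {x : E}
    (hcont : ContinuousAt g'' (prox x)) (hsmall : ‖γ • g'' (prox x)‖ < 1) :
    ∃ B : E →L[ℝ] E, HasFDerivAt prox B x ∧ ∀ v, B v + γ • g'' (prox x) (B v) = v := by
  obtain ⟨e, he⟩ := ContinuousLinearMap.exists_continuousLinearEquiv_one_add hsmall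
  have hψ : HasStrictFDerivAt (fun y => y + γ • g' y) (e : E →L[ℝ] E) (prox x) := by
    rw [he]
    exact hasStrictFDerivAt_of_hasFDerivAt_of_continuousAt
      (Filter.Eventually.of_forall fun y => (hasFDerivAt_id y).add ((hg'' y).const_smul γ))
      (continuousAt_const.add (hcont.const_smul γ))
  have hinv := hψ.to_local_left_inverse
    (Filter.Eventually.of_forall (hprox.apply_add_smul_gradient hγ hγρ hweak hg'))
  rw [hprox.add_smul_gradient_eq hγ hg' x] at hinv
  refine ⟨e.symm, hinv.hasFDerivAt, fun v => ?_⟩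
  have h := e.apply_symm_apply v
  rw [← ContinuousLinearEquiv.coe_coe, he] at h
  simpa using h

lemma exists_hasFDerivAt_moreauGradient (hprox : IsProxMap γ g prox) (hγ : 0 < γ)
    (hγρ : γ * ρ < 1) (hweak : ConvexOn ℝ univ fun x => g x + ρ / 2 * ‖x‖ ^ 2)
    (hg' : ∀ x, HasGradientAt g (g' x) x) (hg'' : ∀ x, HasFDerivAt g' (g'' x) x) {x : E}
    (hcont : ContinuousAt g'' (prox x)) (hL : ‖g'' (prox x)‖ ≤ L) (hγL : γ * L ≤ 1 / 2) :
    ∃ H : E →L[ℝ] E, HasFDerivAt (fun z => γ⁻¹ • (z - prox z)) H x ∧ ‖H‖ ≤ 2 * L ∧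
      ∀ v, -(2 * L) * ‖v‖ ^ 2 ≤ ⟪H v, v⟫ ∧ ⟪H v, v⟫ ≤ L * ‖v‖ ^ 2 := by
  set A := g'' (prox x)
  have hsmall : ‖γ • A‖ < 1 := by
    rw [norm_smul, Real.norm_of_nonneg hγ.le]
    nlinarith [mul_le_mul_of_nonneg_left hL hγ.le]
  obtain ⟨B, hB, hBv⟩ : ∃ B : E →L[ℝ] E, HasFDerivAt prox B x ∧ ∀ v, B v + γ • A (B v) = v :=
    hprox.exists_hasFDerivAt hγ hγρ hweak hg' hg'' hcont hsmall
  have hH : γ⁻¹ • (1 - B) = A.comp B := by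
    ext v
    change γ⁻¹ • (v - B v) = A (B v)
    rw [← eq_sub_of_add_eq' (hBv v), inv_smul_smul₀ hγ.ne']
  refine ⟨A.comp B, ?_, ?_, fun v => ?_⟩
  · rw [← hH]
    exact ((hasFDerivAt_id x).fun_sub hB).fun_const_smul γ⁻¹
  · refine ContinuousLinearMap.opNorm_le_bound _
      (mul_nonneg zero_le_two ((norm_nonneg A).trans hL)) fun v => ?_
    calc ‖A (B v)‖ ≤ L * ‖B v‖ :=
          (A.le_opNorm _).trans (mul_le_mul_of_nonneg_right hL (norm_nonneg _))
      _ ≤ L * (2 * ‖v‖) := mul_le_mul_of_nonneg_left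
          (A.norm_le_two_mul_of_add_smul_apply_eq hγ.le hL hγL (hBv v))
          ((norm_nonneg A).trans hL)
      _ = 2 * L * ‖v‖ := by ring
  · simpa only [hBv v, ContinuousLinearMap.comp_apply] using
      A.inner_apply_add_smul_bounds hγ.le hL hγL (B v)

lemma hasGradientAt_moreauEnvelope (hprox : IsProxMap γ g prox) (hγ : 0 < γ) {K : ℝ}
    (hK : ∀ x y, ‖γ⁻¹ • (x - prox x) - γ⁻¹ • (y - prox y)‖ ≤ K * ‖x - y‖) (z : E) :
    HasGradientAt (moreauEnvelope γ g) (γ⁻¹ • (z - prox z)) z := by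
  rw [hasGradientAt_iff_isLittleO]
  refine (isBigO_of_le' (c := |K| + 1 / (2 * γ)) (nhds z) fun w => ?_).trans_isLittleO
    (isLittleO_pow_sub_sub z one_lt_two)
  rw [Real.norm_eq_abs, norm_pow, norm_norm, abs_le]
  have hupper := hprox.moreauEnvelope_le w (prox z)
  rw [half_inv_mul_norm_sub_sq_eq hγ.ne' w z] at hupper
  have hlower := hprox.moreauEnvelope_le z (prox w)
  rw [half_inv_mul_norm_sub_sq_eq hγ.ne' z w, norm_sub_rev z w, ← neg_sub w z,
    inner_neg_right] at hlower
  have hcross : -(|K| * ‖w - z‖ ^ 2) ≤ ⟪γ⁻¹ • (w - prox w) - γ⁻¹ • (z - prox z), w - z⟫ := by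
    nlinarith [abs_real_inner_le_norm (γ⁻¹ • (w - prox w) - γ⁻¹ • (z - prox z)) (w - z),
      neg_abs_le ⟪γ⁻¹ • (w - prox w) - γ⁻¹ • (z - prox z), w - z⟫, le_abs_self K,
      mul_le_mul_of_nonneg_right (hK w z) (norm_nonneg (w - z)), norm_nonneg (w - z)]
  rw [inner_sub_left] at hcross
  have hz := hprox.moreauEnvelope_eq z
  have hw := hprox.moreauEnvelope_eq w
  constructor <;> nlinarith [sq_nonneg ‖w - z‖, abs_nonneg K]

end IsProxMap

theorem moreau_envelope_smooth_general (d : ℕ) (ρ Lg γ : ℝ)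
    (hγ : 0 < γ) (hγρ : γ * ρ < 1) (hγLg : γ * Lg ≤ 1 / 2)
    (g : EuclideanSpace ℝ (Fin d) → ℝ)
    (hweak : ConvexOn ℝ Set.univ (fun x => g x + ρ / 2 * ‖x‖ ^ 2))
    (g' : EuclideanSpace ℝ (Fin d) → EuclideanSpace ℝ (Fin d))
    (g'' : EuclideanSpace ℝ (Fin d) →
      (EuclideanSpace ℝ (Fin d) →L[ℝ] EuclideanSpace ℝ (Fin d)))
    (hg' : ∀ x, HasGradientAt g (g' x) x)
    (hg'' : ∀ x, HasFDerivAt g' (g'' x) x)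
    (hg''cont : Continuous g'')
    (prox : EuclideanSpace ℝ (Fin d) → EuclideanSpace ℝ (Fin d))
    (hprox : ∀ x y : EuclideanSpace ℝ (Fin d),
      1 / (2 * γ) * ‖x - prox x‖ ^ 2 + g (prox x)
        ≤ 1 / (2 * γ) * ‖x - y‖ ^ 2 + g y)
    (hbound : ∀ z ∈ Set.range prox, ‖g'' z‖ ≤ Lg) :
    (∀ z : EuclideanSpace ℝ (Fin d),
      HasGradientAt
        (fun w : EuclideanSpace ℝ (Fin d) =>
          ⨅ y : EuclideanSpace ℝ (Fin d), 1 / (2 * γ) * ‖w - y‖ ^ 2 + g y)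
        (γ⁻¹ • (z - prox z)) z) ∧
    (∀ x y : EuclideanSpace ℝ (Fin d),
      ‖γ⁻¹ • (x - prox x) - γ⁻¹ • (y - prox y)‖ ≤ 2 * Lg * ‖x - y‖) ∧
    ∀ x : EuclideanSpace ℝ (Fin d),
      ∃ H : EuclideanSpace ℝ (Fin d) →L[ℝ] EuclideanSpace ℝ (Fin d),
        HasFDerivAt (fun z : EuclideanSpace ℝ (Fin d) => γ⁻¹ • (z - prox z)) H x ∧
        ∀ v : EuclideanSpace ℝ (Fin d),
          -(2 * Lg) * ‖v‖ ^ 2 ≤ ⟪H v, v⟫ ∧ ⟪H v, v⟫ ≤ Lg * ‖v‖ ^ 2 := by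
  have hprox' : IsProxMap γ g prox := hprox
  choose H hH hHnorm hHform using fun x =>
    hprox'.exists_hasFDerivAt_moreauGradient hγ hγρ hweak hg' hg'' hg''cont.continuousAt
      (hbound _ ⟨x, rfl⟩) hγLg
  have hlip : ∀ x y, ‖γ⁻¹ • (x - prox x) - γ⁻¹ • (y - prox y)‖ ≤ 2 * Lg * ‖x - y‖ :=
    fun x y => convex_univ.norm_image_sub_le_of_norm_hasFDerivWithin_le
      (fun z _ => (hH z).hasFDerivWithinAt) (fun z _ => hHnorm z) (mem_univ y) (mem_univ x)
  exact ⟨hprox'.hasGradientAt_moreauEnvelope hγ hlip, hlip, fun x => ⟨H x, hH x, hHform x⟩⟩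

/-- Under the hypotheses of Statement 12 with `γ L_g ≤ 1/2`, the Moreau
envelope `g^γ` is `2L_g`-smooth: its gradient `G z = (1/γ)(z − Prox_{γg}(z))` is
`2L_g`-Lipschitz, and its Hessian `H` (the derivative of `G`) satisfies
`−2L_g‖v‖² ≤ ⟨H v, v⟩ ≤ L_g‖v‖²` at every point. -/
theorem moreau_envelope_smooth (d : ℕ) (hd : 1 ≤ d) (ρ Lg γ : ℝ)
    (hρ : 0 < ρ) (hLg : 0 < Lg) (hγ : 0 < γ) (hγρ : γ * ρ < 1) (hγLg : γ * Lg ≤ 1 / 2)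
    (g : EuclideanSpace ℝ (Fin d) → ℝ)
    (hweak : ConvexOn ℝ Set.univ (fun x => g x + ρ / 2 * ‖x‖ ^ 2))
    (g' : EuclideanSpace ℝ (Fin d) → EuclideanSpace ℝ (Fin d))
    (g'' : EuclideanSpace ℝ (Fin d) →
      (EuclideanSpace ℝ (Fin d) →L[ℝ] EuclideanSpace ℝ (Fin d)))
    (hg' : ∀ x, HasGradientAt g (g' x) x)
    (hg'' : ∀ x, HasFDerivAt g' (g'' x) x)
    (hg''cont : Continuous g'')
    (prox : EuclideanSpace ℝ (Fin d) → EuclideanSpace ℝ (Fin d))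
    (hprox : ∀ x y : EuclideanSpace ℝ (Fin d),
      1 / (2 * γ) * ‖x - prox x‖ ^ 2 + g (prox x)
        ≤ 1 / (2 * γ) * ‖x - y‖ ^ 2 + g y)
    (hbound : ∀ z ∈ Set.range prox, ‖g'' z‖ ≤ Lg) :
    (∀ z : EuclideanSpace ℝ (Fin d),
      HasGradientAt
        (fun w : EuclideanSpace ℝ (Fin d) =>
          ⨅ y : EuclideanSpace ℝ (Fin d), 1 / (2 * γ) * ‖w - y‖ ^ 2 + g y)
        (γ⁻¹ • (z - prox z)) z) ∧
    (∀ x y : EuclideanSpace ℝ (Fin d),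
      ‖γ⁻¹ • (x - prox x) - γ⁻¹ • (y - prox y)‖ ≤ 2 * Lg * ‖x - y‖) ∧
    ∀ x : EuclideanSpace ℝ (Fin d),
      ∃ H : EuclideanSpace ℝ (Fin d) →L[ℝ] EuclideanSpace ℝ (Fin d),
        HasFDerivAt (fun z : EuclideanSpace ℝ (Fin d) => γ⁻¹ • (z - prox z)) H x ∧
        ∀ v : EuclideanSpace ℝ (Fin d),
          -(2 * Lg) * ‖v‖ ^ 2 ≤ ⟪H v, v⟫ ∧ ⟪H v, v⟫ ≤ Lg * ‖v‖ ^ 2 :=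
  moreau_envelope_smooth_general d ρ Lg γ hγ hγρ hγLg g hweak g' g'' hg' hg'' hg''cont prox hprox
    hbound
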